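/- arXiv:1612.01600 — 2 statements merged into one kernel-verified Lean document; each statement's English description precedes it below -/
import Mathlib

section
/- (Lemma 1, part 2.) Let {G_k}_{k≥0} be a sequence of directed graphs on n nodes, each containing all self-loops, such that every G_k is regular (every node has the same out-degree and in-degree, so each A_k is doubly stochastic) and strongly connected, and let {A_k} be the associated column-stochastic weight matrices. Then there exists a sequence {φ_k}_{k≥0} of stochastic vectors in ℝ^n such that for all k ≥ t ≥ 0 and all i, j ∈ {1,…,n}: |[A_{k:t}]_{ij} − φ_k^i| ≤ √2 · (1 − 1/(4n³))^{k−t}. -/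
open Finset Matrix

/-- Number of out-neighbors of `j` other than itself, in the digraph with edge set `E`. -/
def outDeg {n : ℕ} (E : Finset (Fin n × Fin n)) (j : Fin n) : ℕ :=
  (Finset.univ.filter fun i => (j, i) ∈ E ∧ i ≠ j).card

/-- Number of in-neighbors of `j` other than itself, in the digraph with edge set `E`. -/
def inDeg {n : ℕ} (E : Finset (Fin n × Fin n)) (j : Fin n) : ℕ :=
  (Finset.univ.filter fun i => (i, j) ∈ E ∧ i ≠ j).card

/-- The column-stochastic weight matrix associated with the edge set `E`:
`A i j = 1/(d_j + 1)` if `(j,i) ∈ E` and `0` otherwise. -/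
noncomputable def weightMatrix {n : ℕ} (E : Finset (Fin n × Fin n)) :
    Matrix (Fin n) (Fin n) ℝ :=
  Matrix.of fun i j => if (j, i) ∈ E then 1 / (outDeg E j + 1) else 0

/-- `prodA A t m = A (t+m) * A (t+m-1) * ⋯ * A t`, i.e. the backward product `A_{(t+m):t}`. -/
noncomputable def prodA {n : ℕ} (A : ℕ → Matrix (Fin n) (Fin n) ℝ) (t : ℕ) :
    ℕ → Matrix (Fin n) (Fin n) ℝ
  | 0 => A t
  | m + 1 => A (t + m + 1) * prodA A t m

/-- The digraph on `Fin n` with edge set `E` is strongly connected. -/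
def StronglyConnected {n : ℕ} (E : Finset (Fin n × Fin n)) : Prop :=
  ∀ i j : Fin n, Relation.ReflTransGen (fun a b => (a, b) ∈ E) i j

/-- The graph sequence `E` is `B`-strongly connected. -/
def BStronglyConnected {n : ℕ} (E : ℕ → Finset (Fin n × Fin n)) (B : ℕ) : Prop :=
  ∀ k : ℕ, StronglyConnected ((Finset.Ico (k * B) ((k + 1) * B)).biUnion E)

/-! Take `φ_k ≡ 1/n`. The deviation of column `j` of `A_{k:t}` from `1/n` is `A_{k:t}` applied
to the zero-sum vector `e_j - 1/n`, whose squared norm is `1 - 1/n ≤ 1`, and each `A_k` is doubly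
stochastic, so it suffices to show `‖A x‖² ≤ (1 - 1/(2n³)) ‖x‖²` for zero-sum `x`, because
`√(1 - 1/(2n³)) ≤ 1 - 1/(4n³)`.

For doubly stochastic `A` the energy drop is `‖x‖² - ‖A x‖² = ½ ∑ᵢ ∑_{j,l} Aᵢⱼ Aᵢₗ (xⱼ - xₗ)²`.
Sort `x` and cut between consecutive sorted values: strong connectivity gives, for every cut, a row
with weight `≥ 1/n` on both sides, so the drop is at least `1/(2n)` times the sum of the squared
gaps. For zero-sum `x` the range of `x` contains `0`, so by Cauchy–Schwarz `‖x‖²` is at most `n²`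
times that sum. -/

section Dissipation

variable {ι : Type*} [Fintype ι]

lemma sum_sum_mul_mul_sub_sq (w x : ι → ℝ) :
    ∑ j, ∑ l, w j * w l * (x j - x l) ^ 2
      = 2 * ((∑ j, w j) * ∑ j, w j * x j ^ 2 - (∑ j, w j * x j) ^ 2) := by
  have hterm : ∀ j l, w j * w l * (x j - x l) ^ 2
      = (w j * x j ^ 2) * w l + w j * (w l * x l ^ 2) - 2 * ((w j * x j) * (w l * x l)) :=
    fun j l => by ring
  simp only [hterm, sum_add_distrib, sum_sub_distrib, ← mul_sum, ← sum_mul]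
  ring

lemma sum_sum_mul_mul_add_swap (w : ι → ℝ) (F : ι → ι → ℝ) :
    ∑ j, ∑ l, w j * w l * (F j l + F l j) = 2 * ∑ j, ∑ l, w j * w l * F j l := by
  simp_rw [mul_add, sum_add_distrib, two_mul]
  congr 1
  rw [sum_comm]
  exact sum_congr rfl fun j _ => sum_congr rfl fun l _ => by ring

variable [DecidableEq ι]

lemma sum_sum_sum_mul_mul_sub_sq_of_mem_doublyStochastic {A : Matrix ι ι ℝ}
    (hA : A ∈ doublyStochastic ℝ ι) (x : ι → ℝ) :
    ∑ i, ∑ j, ∑ l, A i j * A i l * (x j - x l) ^ 2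
      = 2 * (∑ j, x j ^ 2 - ∑ i, (A *ᵥ x) i ^ 2) := by
  have hcol : ∑ i, ∑ j, A i j * x j ^ 2 = ∑ j, x j ^ 2 := by
    rw [sum_comm]
    simp [← sum_mul, sum_col_of_mem_doublyStochastic hA]
  simp only [sum_sum_mul_mul_sub_sq, sum_row_of_mem_doublyStochastic hA, one_mul, ← mul_sum,
    sum_sub_distrib, hcol, mulVec, dotProduct]

end Dissipation

section CutCrossing

variable {ι : Type*} [Fintype ι] [DecidableEq ι]

def CutCrossing (A : Matrix ι ι ℝ) (γ : ℝ) : Prop :=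
  ∀ S : Finset ι, S.Nonempty → S ≠ univ → ∃ i, ∃ j ∈ S, ∃ l ∉ S, γ ≤ A i j ∧ γ ≤ A i l

lemma CutCrossing.le_two_mul_sum_mul_sum_compl {A : Matrix ι ι ℝ} {γ : ℝ}
    (hcut : CutCrossing A γ) (hA : A ∈ rowStochastic ℝ ι) {S : Finset ι}
    (hS : S.Nonempty) (hSu : S ≠ univ) :
    γ ≤ 2 * ∑ i, (∑ j ∈ S, A i j) * ∑ j ∈ Sᶜ, A i j := by
  have h0 : ∀ i j, 0 ≤ A i j := fun _ _ => nonneg_of_mem_rowStochastic hA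
  obtain ⟨i, j, hj, l, hl, hij, hil⟩ := hcut S hS hSu
  have hP : γ ≤ ∑ j ∈ S, A i j := hij.trans (single_le_sum (f := A i) (fun _ _ => h0 i _) hj)
  have hQ : γ ≤ ∑ j ∈ Sᶜ, A i j :=
    hil.trans (single_le_sum (f := A i) (fun _ _ => h0 i _) (mem_compl.2 hl))
  have hPQ : ∑ j ∈ S, A i j + ∑ j ∈ Sᶜ, A i j = 1 := by
    rw [sum_add_sum_compl, sum_row_of_mem_rowStochastic hA]
  have hprod : ∀ i', 0 ≤ (∑ j ∈ S, A i' j) * ∑ j ∈ Sᶜ, A i' j := fun i' =>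
    mul_nonneg (sum_nonneg fun _ _ => h0 _ _) (sum_nonneg fun _ _ => h0 _ _)
  have hP0 : 0 ≤ ∑ j ∈ S, A i j := sum_nonneg fun _ _ => h0 _ _
  have hQ0 : 0 ≤ ∑ j ∈ Sᶜ, A i j := sum_nonneg fun _ _ => h0 _ _
  calc γ ≤ 2 * ((∑ j ∈ S, A i j) * ∑ j ∈ Sᶜ, A i j) := by
        rcases le_total (∑ j ∈ S, A i j) (∑ j ∈ Sᶜ, A i j) with h | h <;>
          nlinarith [mul_nonneg hP0 (sub_nonneg.2 h), mul_nonneg hQ0 (sub_nonneg.2 h)]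
    _ ≤ 2 * ∑ i, (∑ j ∈ S, A i j) * ∑ j ∈ Sᶜ, A i j := by
        gcongr; exact single_le_sum (fun i' _ => hprod i') (mem_univ i)

end CutCrossing

section SortedGaps

lemma sum_Ico_sq_sub_add_sum_Ico_sq_sub_le {Y : ℕ → ℝ} (hY : Monotone Y) (a b : ℕ) :
    ∑ m ∈ Ico a b, (Y (m + 1) - Y m) ^ 2 + ∑ m ∈ Ico b a, (Y (m + 1) - Y m) ^ 2
      ≤ (Y a - Y b) ^ 2 := by
  have key : ∀ {a b}, a ≤ b → ∑ m ∈ Ico a b, (Y (m + 1) - Y m) ^ 2 ≤ (Y b - Y a) ^ 2 := by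
    intro a b hab
    rw [← sum_Ico_sub Y hab]
    exact sum_sq_le_sq_sum_of_nonneg fun m _ => sub_nonneg.2 (hY m.le_succ)
  rcases le_total a b with h | h
  · rw [Ico_eq_empty_of_le h, sum_empty, add_zero, ← neg_sub, neg_sq]
    exact key h
  · rw [Ico_eq_empty_of_le h, sum_empty, zero_add]
    exact key h

lemma sum_range_mul_sum_filter_mul_sum_filter {ι : Type*} [Fintype ι] (f : ℕ → ℝ)
    (w : ι → ℝ) (r : ι → ℕ) {N : ℕ} (hr : ∀ j, r j ≤ N) :
    ∑ m ∈ range N, f m * ((∑ j with r j ≤ m, w j) * ∑ l with m < r l, w l)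
      = ∑ j, ∑ l, w j * w l * ∑ m ∈ Ico (r j) (r l), f m := by
  have hIco : ∀ j l, Ico (r j) (r l) = {m ∈ range N | r j ≤ m ∧ m < r l} := fun j l => by
    ext m; simp only [mem_Ico, mem_filter, mem_range]; have := hr l; omega
  simp_rw [hIco, sum_filter, sum_mul_sum, mul_sum, ite_mul, mul_ite, ite_and, zero_mul, mul_zero]
  rw [sum_comm]
  refine sum_congr rfl fun j _ => ?_
  rw [sum_comm]
  refine sum_congr rfl fun l _ => sum_congr rfl fun m _ => ?_
  split_ifs <;> ring

lemma Fin.exists_perm_eq_monotone {α : Type*} [LinearOrder α] {n : ℕ} (hn : 0 < n)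
    (x : Fin n → α) : ∃ σ : Equiv.Perm (Fin n), ∃ Y : ℕ → α, Monotone Y ∧ ∀ a, x (σ a) = Y a := by
  refine ⟨Tuple.sort x, fun a => x (Tuple.sort x ⟨min a (n - 1), by omega⟩), ?_, fun a => ?_⟩
  · exact fun a b hab => Tuple.monotone_sort x (Fin.mk_le_mk.2 (by omega))
  · congr 2; ext; simp; omega

end SortedGaps

section Contraction

variable {n : ℕ}

lemma CutCrossing.le_two_mul_sum_filter_mul_sum_filter {A : Matrix (Fin n) (Fin n) ℝ} {γ : ℝ}
    (hcut : CutCrossing A γ) (hA : A ∈ rowStochastic ℝ (Fin n)) (σ : Equiv.Perm (Fin n))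
    {m : ℕ} (hm : m + 1 < n) :
    γ ≤ 2 * ∑ i, (∑ j with (σ.symm j : ℕ) ≤ m, A i j) * ∑ l with m < (σ.symm l : ℕ), A i l := by
  have hcompl : (univ.filter fun j => (σ.symm j : ℕ) ≤ m)ᶜ
      = univ.filter fun l => m < (σ.symm l : ℕ) := by
    rw [compl_filter]; simp only [not_le]
  rw [← hcompl]
  refine hcut.le_two_mul_sum_mul_sum_compl hA ⟨σ ⟨0, by omega⟩, by simp⟩ fun h => ?_
  have : σ ⟨m + 1, hm⟩ ∈ univ.filter fun j => (σ.symm j : ℕ) ≤ m := by rw [h]; exact mem_univ _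
  simp at this

lemma mul_sum_sq_gaps_le_of_cutCrossing {A : Matrix (Fin n) (Fin n) ℝ}
    (hA : A ∈ doublyStochastic ℝ (Fin n)) {γ : ℝ} (hcut : CutCrossing A γ) {x : Fin n → ℝ}
    (σ : Equiv.Perm (Fin n)) {Y : ℕ → ℝ} (hY : Monotone Y) (hxY : ∀ a, x (σ a) = Y a) :
    γ * ∑ m ∈ range (n - 1), (Y (m + 1) - Y m) ^ 2
      ≤ 2 * (∑ j, x j ^ 2 - ∑ i, (A *ᵥ x) i ^ 2) := by
  -- `r j` is the position of `x j` in sorted order, so the cut `{j | r j ≤ m}` separates the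
  -- `m + 1` smallest entries from the others across the gap `Y (m + 1) - Y m`.
  set g : ℕ → ℝ := fun m => (Y (m + 1) - Y m) ^ 2
  set r : Fin n → ℕ := fun j => σ.symm j
  have hx : ∀ j, x j = Y (r j) := fun j => by simpa using hxY (σ.symm j)
  have hrow := (mem_doublyStochastic_iff_mem_rowStochastic_and_mem_colStochastic.1 hA).1
  have hexch : ∀ i, ∑ m ∈ range (n - 1), g m *
        ((∑ j with r j ≤ m, A i j) * ∑ l with m < r l, A i l)
      = ∑ j, ∑ l, A i j * A i l * ∑ m ∈ Ico (r j) (r l), g m := fun i =>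
    sum_range_mul_sum_filter_mul_sum_filter g (fun j => A i j) r
      fun j => Nat.le_sub_one_of_lt (σ.symm j).isLt
  have hpair : ∀ j l, ∑ m ∈ Ico (r j) (r l), g m + ∑ m ∈ Ico (r l) (r j), g m
      ≤ (x j - x l) ^ 2 := fun j l => by
    rw [hx j, hx l]
    exact sum_Ico_sq_sub_add_sum_Ico_sq_sub_le hY _ _
  calc γ * ∑ m ∈ range (n - 1), g m
      = ∑ m ∈ range (n - 1), g m * γ := by rw [mul_comm, sum_mul]
    _ ≤ ∑ m ∈ range (n - 1),
          g m * (2 * ∑ i, (∑ j with r j ≤ m, A i j) * ∑ l with m < r l, A i l) := by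
        refine sum_le_sum fun m hm => mul_le_mul_of_nonneg_left ?_ (sq_nonneg _)
        exact hcut.le_two_mul_sum_filter_mul_sum_filter hrow σ (by rw [mem_range] at hm; omega)
    _ = ∑ i, 2 * ∑ j, ∑ l, A i j * A i l * ∑ m ∈ Ico (r j) (r l), g m := by
        simp_rw [← hexch, mul_sum (s := (univ : Finset (Fin n))), mul_sum (s := range (n - 1))]
        rw [sum_comm]
        refine sum_congr rfl fun i _ => sum_congr rfl fun m _ => by ring
    _ ≤ ∑ i, ∑ j, ∑ l, A i j * A i l * (x j - x l) ^ 2 := by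
        simp_rw [← sum_sum_mul_mul_add_swap]
        refine sum_le_sum fun i _ => sum_le_sum fun j _ => sum_le_sum fun l _ => ?_
        have := nonneg_of_mem_doublyStochastic hA (i := i) (j := j)
        have := nonneg_of_mem_doublyStochastic hA (i := i) (j := l)
        gcongr; exact hpair j l
    _ = 2 * (∑ j, x j ^ 2 - ∑ i, (A *ᵥ x) i ^ 2) :=
        sum_sum_sum_mul_mul_sub_sq_of_mem_doublyStochastic hA x

lemma sum_sq_le_sq_mul_sum_sq_gaps {x : Fin n → ℝ} (hx : ∑ i, x i = 0)
    (σ : Equiv.Perm (Fin n)) {Y : ℕ → ℝ} (hY : Monotone Y) (hxY : ∀ a, x (σ a) = Y a) :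
    ∑ i, x i ^ 2 ≤ n ^ 2 * ∑ m ∈ range (n - 1), (Y (m + 1) - Y m) ^ 2 := by
  rcases Nat.eq_zero_or_pos n with rfl | hn
  · simp
  have hrange : ∀ j, Y 0 ≤ x j ∧ x j ≤ Y (n - 1) := fun j => by
    have hj := hxY (σ.symm j)
    rw [Equiv.apply_symm_apply] at hj
    exact hj ▸ ⟨hY (Nat.zero_le _), hY (Nat.le_sub_one_of_lt (σ.symm j).isLt)⟩
  have hne : (univ : Finset (Fin n)).Nonempty := ⟨⟨0, hn⟩, mem_univ _⟩
  obtain ⟨j₀, -, hj₀⟩ := exists_le_of_sum_le (f := x) (g := fun _ => (0 : ℝ)) hne (by simp [hx])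
  obtain ⟨j₁, -, hj₁⟩ := exists_le_of_sum_le (f := fun _ => (0 : ℝ)) (g := x) hne (by simp [hx])
  have hsq : ∀ j, x j ^ 2 ≤ (Y (n - 1) - Y 0) ^ 2 := fun j =>
    sq_le_sq' (by linarith [hrange j, hrange j₁]) (by linarith [hrange j, hrange j₀])
  have hcs : (Y (n - 1) - Y 0) ^ 2 ≤ n * ∑ m ∈ range (n - 1), (Y (m + 1) - Y m) ^ 2 := by
    rw [← sum_range_sub]
    refine sq_sum_le_card_mul_sum_sq.trans ?_
    rw [card_range]
    gcongr
    exact_mod_cast Nat.sub_le n 1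
  calc ∑ i, x i ^ 2 ≤ ∑ _i : Fin n, (Y (n - 1) - Y 0) ^ 2 := sum_le_sum fun j _ => hsq j
    _ = n * (Y (n - 1) - Y 0) ^ 2 := by simp
    _ ≤ n * (n * ∑ m ∈ range (n - 1), (Y (m + 1) - Y m) ^ 2) := by gcongr
    _ = n ^ 2 * ∑ m ∈ range (n - 1), (Y (m + 1) - Y m) ^ 2 := by ring

theorem sum_sq_mulVec_le_of_cutCrossing {A : Matrix (Fin n) (Fin n) ℝ}
    (hA : A ∈ doublyStochastic ℝ (Fin n)) {γ : ℝ} (hγ : 0 ≤ γ) (hcut : CutCrossing A γ)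
    {x : Fin n → ℝ} (hx : ∑ i, x i = 0) :
    ∑ i, (A *ᵥ x) i ^ 2 ≤ (1 - γ / (2 * n ^ 2)) * ∑ i, x i ^ 2 := by
  rcases Nat.eq_zero_or_pos n with rfl | hn
  · simp
  obtain ⟨σ, Y, hY, hxY⟩ := Fin.exists_perm_eq_monotone hn x
  have hgap := mul_sum_sq_gaps_le_of_cutCrossing hA hcut σ hY hxY
  have hspread := sum_sq_le_sq_mul_sum_sq_gaps hx σ hY hxY
  have hdecay : γ / (2 * n ^ 2) * ∑ i, x i ^ 2 ≤ ∑ i, x i ^ 2 - ∑ i, (A *ᵥ x) i ^ 2 := by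
    rw [div_mul_eq_mul_div, div_le_iff₀ (by positivity)]
    nlinarith [mul_le_mul_of_nonneg_left hspread hγ]
  linarith

end Contraction

section Products

variable {n : ℕ} {A : ℕ → Matrix (Fin n) (Fin n) ℝ}

lemma prodA_mem {S : Submonoid (Matrix (Fin n) (Fin n) ℝ)} (hA : ∀ k, A k ∈ S) (t m : ℕ) :
    prodA A t m ∈ S := by
  induction m with
  | zero => exact hA t
  | succ m ih => exact S.mul_mem (hA _) ih

lemma sum_sq_prodA_mulVec_le (hA : ∀ k, A k ∈ colStochastic ℝ (Fin n)) {q : ℝ} (hq : 0 ≤ q)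
    (hcontr : ∀ k (x : Fin n → ℝ), ∑ i, x i = 0 → ∑ i, (A k *ᵥ x) i ^ 2 ≤ q * ∑ i, x i ^ 2)
    (t m : ℕ) {x : Fin n → ℝ} (hx : ∑ i, x i = 0) :
    ∑ i, (prodA A t m *ᵥ x) i ^ 2 ≤ q ^ (m + 1) * ∑ i, x i ^ 2 := by
  induction m with
  | zero => simpa [prodA] using hcontr t x hx
  | succ m ih =>
    have hsum : ∑ i, (prodA A t m *ᵥ x) i = 0 := by
      rw [sum_mulVec_of_mem_colStochastic (prodA_mem hA t m), hx]
    rw [prodA, ← mulVec_mulVec]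
    calc _ ≤ q * ∑ i, (prodA A t m *ᵥ x) i ^ 2 := hcontr _ _ hsum
      _ ≤ q * (q ^ (m + 1) * ∑ i, x i ^ 2) := by gcongr
      _ = q ^ (m + 1 + 1) * ∑ i, x i ^ 2 := by ring

lemma sq_prodA_sub_one_div_le (hA : ∀ k, A k ∈ doublyStochastic ℝ (Fin n)) {q : ℝ} (hq : 0 ≤ q)
    (hcontr : ∀ k (x : Fin n → ℝ), ∑ i, x i = 0 → ∑ i, (A k *ᵥ x) i ^ 2 ≤ q * ∑ i, x i ^ 2)
    (t m : ℕ) (i j : Fin n) :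
    (prodA A t m i j - 1 / n) ^ 2 ≤ q ^ (m + 1) := by
  have hn : (n : ℝ) ≠ 0 := by have := i.pos; positivity
  set v : Fin n → ℝ := Pi.single j 1 - (1 / n : ℝ) • 1
  have hv : ∑ l, v l = 0 := by simp [v, hn]
  have hv2 : ∑ l, v l ^ 2 ≤ 1 := by
    have hsq : ∀ l, v l ^ 2 = v l * (Pi.single j 1 : Fin n → ℝ) l - 1 / n * v l := fun l => by
      have hvl : v l = (Pi.single j 1 : Fin n → ℝ) l - 1 / n := by simp [v]
      rw [sq]; nth_rw 2 [hvl]; ring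
    have hvv : ∑ l, v l ^ 2 = v j := by
      rw [sum_congr rfl fun l _ => hsq l, sum_sub_distrib, ← mul_sum, hv, mul_zero, sub_zero]
      exact dotProduct_single_one v j
    rw [hvv]
    simp [v]
  have hPv : (prodA A t m *ᵥ v) i = prodA A t m i j - 1 / n := by
    have := (mem_doublyStochastic_iff_mem_rowStochastic_and_mem_colStochastic.1
      (prodA_mem hA t m)).1
    simp [v, mulVec_sub, mulVec_smul, one_vecMul_of_mem_rowStochastic this]
  have hcol (k : ℕ) : A k ∈ colStochastic ℝ (Fin n) :=
    (mem_doublyStochastic_iff_mem_rowStochastic_and_mem_colStochastic.1 (hA k)).2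
  calc (prodA A t m i j - 1 / n) ^ 2 = (prodA A t m *ᵥ v) i ^ 2 := by rw [hPv]
    _ ≤ ∑ l, (prodA A t m *ᵥ v) l ^ 2 :=
        single_le_sum (f := fun l => (prodA A t m *ᵥ v) l ^ 2) (fun _ _ => sq_nonneg _)
          (mem_univ i)
    _ ≤ q ^ (m + 1) * ∑ l, v l ^ 2 := sum_sq_prodA_mulVec_le hcol hq hcontr t m hv
    _ ≤ q ^ (m + 1) := mul_le_of_le_one_right (pow_nonneg hq _) hv2

end Products

lemma Relation.ReflTransGen.exists_rel_of_not {α : Type*} {r : α → α → Prop} {p : α → Prop}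
    {a b : α} (h : Relation.ReflTransGen r a b) (ha : p a) (hb : ¬p b) :
    ∃ u v, p u ∧ ¬p v ∧ r u v := by
  induction h with
  | refl => exact absurd ha hb
  | @tail c d _ hcd ih => exact (em (p c)).elim (fun hc => ⟨c, d, hc, hb, hcd⟩) ih

section WeightMatrix

variable {n : ℕ} {E : Finset (Fin n × Fin n)}

lemma card_filter_and_ne_add_one {α : Type*} [Fintype α] [DecidableEq α] {p : α → Prop}
    [DecidablePred p] {j : α} (hj : p j) : #{i | p i ∧ i ≠ j} + 1 = #{i | p i} := by
  rw [filter_and, filter_ne', inter_erase, inter_univ, card_erase_add_one (by simpa using hj)]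

lemma card_filter_mem_eq_outDeg_add_one (hloop : ∀ i, (i, i) ∈ E) (j : Fin n) :
    #{i | (j, i) ∈ E} = outDeg E j + 1 :=
  (card_filter_and_ne_add_one (p := fun i => (j, i) ∈ E) (hloop j)).symm

lemma card_filter_mem_eq_inDeg_add_one (hloop : ∀ i, (i, i) ∈ E) (j : Fin n) :
    #{i | (i, j) ∈ E} = inDeg E j + 1 :=
  (card_filter_and_ne_add_one (p := fun i => (i, j) ∈ E) (hloop j)).symm

lemma outDeg_add_one_le (j : Fin n) : outDeg E j + 1 ≤ n := by
  have h : outDeg E j ≤ #(univ.erase j) := card_le_card fun i => by simp +contextual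
  rw [card_erase_of_mem (mem_univ j), card_univ, Fintype.card_fin] at h
  have := j.pos
  omega

lemma weightMatrix_apply_of_mem {i j : Fin n} (h : (j, i) ∈ E) :
    weightMatrix E i j = 1 / (outDeg E j + 1) := by
  simp [weightMatrix, h]

lemma one_div_le_weightMatrix_apply {i j : Fin n} (h : (j, i) ∈ E) :
    1 / (n : ℝ) ≤ weightMatrix E i j := by
  rw [weightMatrix_apply_of_mem h]
  gcongr
  exact_mod_cast outDeg_add_one_le j

lemma weightMatrix_mem_doublyStochastic (hloop : ∀ i, (i, i) ∈ E)
    (hreg : ∃ d : ℕ, (∀ j, outDeg E j = d) ∧ (∀ j, inDeg E j = d)) :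
    weightMatrix E ∈ doublyStochastic ℝ (Fin n) := by
  obtain ⟨d, hout, hin⟩ := hreg
  refine mem_doublyStochastic_iff_sum.2 ⟨fun i j => ?_, fun i => ?_, fun j => ?_⟩
  · simp only [weightMatrix, of_apply]; split_ifs <;> positivity
  · simp [weightMatrix, hout, ← sum_filter, card_filter_mem_eq_inDeg_add_one hloop, hin,
      Nat.cast_add_one_ne_zero]
  · simp [weightMatrix, ← sum_filter, card_filter_mem_eq_outDeg_add_one hloop,
      Nat.cast_add_one_ne_zero]

lemma StronglyConnected.cutCrossing_weightMatrix (hconn : StronglyConnected E)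
    (hloop : ∀ i, (i, i) ∈ E) : CutCrossing (weightMatrix E) (1 / n) := by
  intro S ⟨a, ha⟩ hS
  obtain ⟨b, hb⟩ : ∃ b, b ∉ S := by simpa [eq_univ_iff_forall] using hS
  obtain ⟨u, v, hu, hv, huv⟩ := (hconn a b).exists_rel_of_not (p := (· ∈ S)) ha hb
  -- Row `v` of the weight matrix sees `u ∈ S` along the edge and itself `∉ S` along its loop.
  exact ⟨v, u, hu, v, hv, one_div_le_weightMatrix_apply huv,
    one_div_le_weightMatrix_apply (hloop v)⟩

end WeightMatrix

lemma abs_le_pow_of_sq_le_pow_succ {a ε : ℝ} (hε₀ : 0 ≤ ε) (hε : 2 * ε ≤ 1) {m : ℕ}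
    (h : a ^ 2 ≤ (1 - 2 * ε) ^ (m + 1)) : |a| ≤ (1 - ε) ^ m := by
  refine abs_le_of_sq_le_sq ?_ (pow_nonneg (by linarith) m)
  calc a ^ 2 ≤ (1 - 2 * ε) ^ (m + 1) := h
    _ ≤ (1 - 2 * ε) ^ m := pow_le_pow_of_le_one (by linarith) (by linarith) m.le_succ
    _ ≤ ((1 - ε) ^ 2) ^ m := pow_le_pow_left₀ (by linarith) (by nlinarith) m
    _ = ((1 - ε) ^ m) ^ 2 := by rw [← pow_mul, ← pow_mul, mul_comm]

theorem column_stochastic_product_geometric_convergence_regular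
    (n : ℕ) (hn : 1 ≤ n)
    (E : ℕ → Finset (Fin n × Fin n)) (hloop : ∀ k i, (i, i) ∈ E k)
    (hreg : ∀ k, ∃ d : ℕ, (∀ j, outDeg (E k) j = d) ∧ (∀ j, inDeg (E k) j = d))
    (hconn : ∀ k, StronglyConnected (E k))
    (A : ℕ → Matrix (Fin n) (Fin n) ℝ) (hA : ∀ k, A k = weightMatrix (E k)) :
    ∃ φ : ℕ → Fin n → ℝ,
      (∀ k, (∀ i, 0 ≤ φ k i) ∧ ∑ i, φ k i = 1) ∧
      ∀ t k, t ≤ k → ∀ i j,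
        |prodA A t (k - t) i j - φ k i|
          ≤ Real.sqrt 2 * (1 - 1 / (4 * (n : ℝ) ^ 3)) ^ (k - t) := by
  have hn₁ : (1 : ℝ) ≤ n ^ 3 := one_le_pow₀ (by exact_mod_cast hn)
  set ε : ℝ := 1 / (4 * (n : ℝ) ^ 3) with hε_def
  have hε₀ : 0 ≤ ε := by positivity
  have hε : 2 * ε ≤ 1 := by
    rw [mul_one_div, div_le_one (by positivity)]; linarith
  have hstoch (k : ℕ) : A k ∈ doublyStochastic ℝ (Fin n) :=
    hA k ▸ weightMatrix_mem_doublyStochastic (hloop k) (hreg k)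
  have hcontr (k : ℕ) (x : Fin n → ℝ) (hx : ∑ i, x i = 0) :
      ∑ i, (A k *ᵥ x) i ^ 2 ≤ (1 - 2 * ε) * ∑ i, x i ^ 2 := by
    have hcut := hA k ▸ (hconn k).cutCrossing_weightMatrix (hloop k)
    convert sum_sq_mulVec_le_of_cutCrossing (hstoch k) (by positivity) hcut hx using 3
    rw [hε_def]
    field_simp
    ring
  refine ⟨fun _ _ => 1 / n, fun k => ⟨fun _ => by positivity, ?_⟩, fun t k _ i j => ?_⟩
  · simp [mul_inv_cancel₀ (by positivity : (n : ℝ) ≠ 0)]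
  calc _ ≤ (1 - ε) ^ (k - t) := abs_le_pow_of_sq_le_pow_succ hε₀ hε
        (sq_prodA_sub_one_div_le hstoch (by linarith) hcontr t (k - t) i j)
    _ ≤ √2 * (1 - ε) ^ (k - t) :=
        le_mul_of_one_le_left (pow_nonneg (by linarith) _) (Real.one_le_sqrt.2 (by norm_num))
end

section
/- (Lemma 2, first part.) Let {G_k}_{k≥0} be a B-strongly connected sequence of directed graphs on n nodes, each containing all self-loops, with associated column-stochastic weight matrices {A_k}, and define δ = inf_{k≥0} min_{1≤i≤n} [A_{k:0} 𝟏_n]_i where 𝟏_n is the all-ones vector. Then δ ≥ 1/n^{nB}. -/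
open Finset Matrix

/-!
Call a node reached from `j` after `m` steps if a time-respecting walk leads from `j` to it
using edges of `G_t, …, G_{t+m-1}`. Every reached node gets weight at least `n⁻¹ ^ m` in
column `j` of `A_{t+m-1:t}`, since every edge carries weight at least `1/n`. Self-loops make the
reached sets grow monotonically, and each aligned block of `B` graphs, being strongly connected,
adds a new node as long as some node is still missing. Any `n * B` consecutive steps contain
`n - 1` aligned blocks, so every entry of a product of `n * B` consecutive matrices is at least
`n⁻¹ ^ (n * B)`. Hence for `k ≥ n * B` the `i`-th row sum of `A_{k:0}` is at least
`n⁻¹ ^ (n * B)` times the total mass `n` of the column-stochastic `A_{k-nB:0}`, while for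
`k < n * B` the diagonal entry of `A_{k:0}` alone suffices.
-/

open Relation

theorem Relation.ReflTransGen.exists_mem_notMem {α : Type*} {r : α → α → Prop} {S : Set α}
    {a b : α} (h : ReflTransGen r a b) (ha : a ∈ S) (hb : b ∉ S) :
    ∃ x ∈ S, ∃ y ∉ S, r x y := by
  induction h with
  | refl => exact absurd ha hb
  | @tail c d _ hcd ih =>
    by_cases hc : c ∈ S
    · exact ⟨c, hc, d, hb, hcd⟩
    · exact ih hc

section Reach

variable {α : Type*}

def reach (r : ℕ → α → α → Prop) (t : ℕ) (a : α) : ℕ → Set α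
  | 0 => {a}
  | m + 1 => {c | ∃ b ∈ reach r t a m, r (t + m) b c}

def BlockConnected (r : ℕ → α → α → Prop) (B : ℕ) : Prop :=
  ∀ q x y, ReflTransGen (fun x y => ∃ s ∈ Set.Ico (q * B) ((q + 1) * B), r s x y) x y

variable {r : ℕ → α → α → Prop}

theorem reach_mono (hr : ∀ s x, r s x x) (t : ℕ) (a : α) : Monotone (reach r t a) :=
  monotone_nat_of_le_succ fun _ c hc => ⟨c, hc, hr _ c⟩

theorem mem_reach_self (hr : ∀ s x, r s x x) (t : ℕ) (a : α) (m : ℕ) : a ∈ reach r t a m :=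
  reach_mono hr t a m.zero_le rfl

theorem reach_ssubset_of_window (hr : ∀ s x, r s x x) {t m m' lo hi : ℕ} {a : α}
    (hwindow : ∀ x y, ReflTransGen (fun x y => ∃ s ∈ Set.Ico lo hi, r s x y) x y)
    (hlo : t + m ≤ lo) (hhi : hi ≤ t + m') (hne : reach r t a m ≠ Set.univ) :
    reach r t a m ⊂ reach r t a m' := by
  obtain ⟨b, hb⟩ := (Set.ne_univ_iff_exists_notMem _).1 hne
  obtain ⟨x, hx, y, hy, s, ⟨hs_lo, hs_hi⟩, hxy⟩ :=
    (hwindow a b).exists_mem_notMem (mem_reach_self hr t a m) hb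
  have hx' : x ∈ reach r t a (s - t) := reach_mono hr t a (by omega) hx
  have hy' : y ∈ reach r t a (s - t + 1) := ⟨x, hx', by rwa [Nat.add_sub_cancel' (by omega)]⟩
  exact ⟨reach_mono hr t a (by omega), fun hsub => hy (hsub (reach_mono hr t a (by omega) hy'))⟩

theorem min_le_ncard_reach [Finite α] (hr : ∀ s x, r s x x) {B : ℕ}
    (hconn : BlockConnected r B)
    {t q₀ : ℕ} (ht : t ≤ q₀ * B) (a : α) (c : ℕ) :
    min (Nat.card α) (c + 1) ≤ (reach r t a ((q₀ + c) * B - t)).ncard := by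
  induction c with
  | zero =>
    have := (Set.ncard_pos (Set.toFinite _)).2 ⟨a, mem_reach_self hr t a ((q₀ + 0) * B - t)⟩
    omega
  | succ c ih =>
    have hstart : t ≤ (q₀ + c) * B := ht.trans (Nat.mul_le_mul_right _ (by omega))
    have hnext : (q₀ + (c + 1)) * B = (q₀ + c) * B + B := by ring
    have hend : (q₀ + c + 1) * B = (q₀ + c) * B + B := by ring
    by_cases hu : reach r t a ((q₀ + c) * B - t) = Set.univ
    · have hmono := reach_mono hr t a
        (show (q₀ + c) * B - t ≤ (q₀ + (c + 1)) * B - t by omega)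
      rw [hu, Set.univ_subset_iff] at hmono
      rw [hmono, Set.ncard_univ]
      exact min_le_left _ _
    · have hlt := Set.ncard_lt_ncard (reach_ssubset_of_window hr (hconn (q₀ + c))
        (m' := (q₀ + (c + 1)) * B - t) (by omega) (by omega) hu)
      omega

theorem reach_eq_univ [Finite α] (hr : ∀ s x, r s x x) {B : ℕ}
    (hconn : BlockConnected r B)
    (hB : 0 < B) (t : ℕ) (a : α) :
    reach r t a (Nat.card α * B) = Set.univ := by
  have hcard : 0 < Nat.card α := Nat.card_pos_iff.2 ⟨⟨a⟩, inferInstance⟩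
  have ht : t ≤ (t / B + 1) * B := (Nat.lt_mul_div_succ t hB).le.trans_eq (mul_comm _ _)
  have hfull := min_le_ncard_reach hr hconn ht a (Nat.card α - 1)
  rw [Nat.sub_add_cancel hcard, min_self] at hfull
  have huniv := Set.eq_of_subset_of_ncard_le
    (Set.subset_univ (reach r t a ((t / B + 1 + (Nat.card α - 1)) * B - t)))
    (by rwa [Set.ncard_univ]) (Set.toFinite _)
  have hsteps : (t / B + 1 + (Nat.card α - 1)) * B - t ≤ Nat.card α * B := by
    have := Nat.div_mul_le_self t B
    rw [show t / B + 1 + (Nat.card α - 1) = t / B + Nat.card α by omega, add_mul]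
    omega
  rw [← Set.univ_subset_iff, ← huniv]
  exact reach_mono hr t a hsteps

end Reach

theorem mul_sum_le_mulVec_apply {R ι κ : Type*} [Fintype ι] [Semiring R] [PartialOrder R]
    [IsOrderedRing R] {Q : Matrix κ ι R} {x : ι → R} {c : R} {i : κ}
    (hQ : ∀ l, c ≤ Q i l) (hx : ∀ l, 0 ≤ x l) : c * ∑ l, x l ≤ (Q *ᵥ x) i := by
  rw [Finset.mul_sum]
  exact Finset.sum_le_sum fun l _ => mul_le_mul_of_nonneg_right (hQ l) (hx l)

section WeightMatrix

variable {n : ℕ} {E : Finset (Fin n × Fin n)}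

theorem outDeg_lt (j : Fin n) : outDeg E j < n := by
  have := Finset.card_lt_univ_of_notMem (x := j)
    (s := Finset.univ.filter fun i => (j, i) ∈ E ∧ i ≠ j) (by simp)
  rwa [Fintype.card_fin] at this

theorem card_filter_edge_eq_outDeg_add_one {j : Fin n} (hj : (j, j) ∈ E) :
    (Finset.univ.filter fun i => (j, i) ∈ E).card = outDeg E j + 1 := by
  rw [outDeg, ← Finset.card_erase_add_one (Finset.mem_filter.2 ⟨Finset.mem_univ j, hj⟩)]
  congr 2
  ext i
  simp [and_comm]

theorem weightMatrix_mem_colStochastic (hloop : ∀ i, (i, i) ∈ E) :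
    weightMatrix E ∈ colStochastic ℝ (Fin n) := by
  refine mem_colStochastic_iff_sum.2 ⟨fun i j => ?_, fun j => ?_⟩
  · simp only [weightMatrix, of_apply]
    split_ifs <;> positivity
  · simp only [weightMatrix, of_apply]
    rw [← Finset.sum_filter, Finset.sum_const, card_filter_edge_eq_outDeg_add_one (hloop j),
      nsmul_eq_mul]
    push_cast
    field_simp

theorem inv_le_weightMatrix_apply {i j : Fin n} (h : (j, i) ∈ E) :
    (n : ℝ)⁻¹ ≤ weightMatrix E i j := by
  simp only [weightMatrix, of_apply, if_pos h, one_div]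
  exact inv_anti₀ (by positivity) (by exact_mod_cast outDeg_lt j)

end WeightMatrix

section Products

variable {n : ℕ} {A : ℕ → Matrix (Fin n) (Fin n) ℝ}

theorem prodA_mem_colStochastic (hA : ∀ k, A k ∈ colStochastic ℝ (Fin n)) (t m : ℕ) :
    prodA A t m ∈ colStochastic ℝ (Fin n) := by
  induction m with
  | zero => exact hA t
  | succ m ih => exact Submonoid.mul_mem _ (hA _) ih

theorem prodA_add (t m₁ m₂ : ℕ) :
    prodA A t (m₁ + m₂ + 1) = prodA A (t + m₁ + 1) m₂ * prodA A t m₁ := by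
  induction m₂ with
  | zero => rfl
  | succ m₂ ih =>
    rw [show m₁ + (m₂ + 1) + 1 = m₁ + m₂ + 1 + 1 by ring, prodA, ih, prodA,
      Matrix.mul_assoc, show t + (m₁ + m₂ + 1) + 1 = t + m₁ + 1 + m₂ + 1 by ring]

variable {r : ℕ → Fin n → Fin n → Prop} {ε : ℝ}

theorem pow_le_prodA_apply_of_mem_reach (hA : ∀ k, A k ∈ colStochastic ℝ (Fin n))
    (hε₀ : 0 ≤ ε) (hε : ∀ k i j, r k j i → ε ≤ A k i j) {t m : ℕ} {i j : Fin n}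
    (hi : i ∈ reach r t j (m + 1)) : ε ^ (m + 1) ≤ prodA A t m i j := by
  induction m generalizing i with
  | zero =>
    obtain ⟨b, rfl, hb⟩ := hi
    simpa [prodA] using hε t i b hb
  | succ m ih =>
    obtain ⟨l, hl, hli⟩ := hi
    calc ε ^ (m + 1 + 1) = ε * ε ^ (m + 1) := pow_succ' ε (m + 1)
      _ ≤ A (t + m + 1) i l * prodA A t m l j :=
        mul_le_mul (hε _ i l hli) (ih hl) (by positivity) (nonneg_of_mem_colStochastic (hA _))
      _ ≤ ∑ x, A (t + m + 1) i x * prodA A t m x j :=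
        Finset.single_le_sum (f := fun x => A (t + m + 1) i x * prodA A t m x j)
          (fun x _ => mul_nonneg (nonneg_of_mem_colStochastic (hA _))
            (nonneg_of_mem_colStochastic (prodA_mem_colStochastic hA t m)))
          (Finset.mem_univ l)
      _ = prodA A t (m + 1) i j := (Matrix.mul_apply).symm

theorem pow_le_prodA_apply (hA : ∀ k, A k ∈ colStochastic ℝ (Fin n))
    (hε₀ : 0 ≤ ε) (hε : ∀ k i j, r k j i → ε ≤ A k i j) (hr : ∀ s x, r s x x)
    {B : ℕ} (hconn : BlockConnected r B) (hB : 0 < B) (t : ℕ) (i j : Fin n) :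
    ε ^ (n * B) ≤ prodA A t (n * B - 1) i j := by
  have hnB : n * B - 1 + 1 = n * B := Nat.sub_add_cancel (Nat.mul_pos i.pos hB)
  have hi : i ∈ reach r t j (n * B - 1 + 1) := by
    have huniv := reach_eq_univ hr hconn hB t j
    rw [Nat.card_fin] at huniv
    rw [hnB, huniv]
    exact Set.mem_univ i
  simpa only [hnB] using pow_le_prodA_apply_of_mem_reach hA hε₀ hε hi

theorem pow_le_prodA_mulVec_one (hA : ∀ k, A k ∈ colStochastic ℝ (Fin n))
    (hε₀ : 0 ≤ ε) (hε₁ : ε ≤ 1) (hε : ∀ k i j, r k j i → ε ≤ A k i j) (hr : ∀ s x, r s x x)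
    {B : ℕ} (hconn : BlockConnected r B) (hB : 0 < B) (t k : ℕ) (i : Fin n) :
    ε ^ (n * B) ≤ (prodA A t k *ᵥ 1) i := by
  rcases lt_or_ge k (n * B) with hk | hk
  · calc ε ^ (n * B) ≤ ε ^ (k + 1) := pow_le_pow_of_le_one hε₀ hε₁ hk
      _ ≤ prodA A t k i i :=
        pow_le_prodA_apply_of_mem_reach hA hε₀ hε (mem_reach_self hr t i _)
      _ ≤ (prodA A t k *ᵥ 1) i := by
        simpa [Matrix.mulVec, dotProduct] using
          Finset.single_le_sum (f := fun j => prodA A t k i j)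
            (fun j _ => nonneg_of_mem_colStochastic (prodA_mem_colStochastic hA t k))
            (Finset.mem_univ i)
  · have hnB : 0 < n * B := Nat.mul_pos i.pos hB
    obtain ⟨s, rfl⟩ : ∃ s, k = s + (n * B - 1) + 1 := ⟨k - n * B, by omega⟩
    have hmass : ∑ l, (prodA A t s *ᵥ 1) l = n := by
      simp [sum_mulVec_of_mem_colStochastic (prodA_mem_colStochastic hA t s)]
    rw [prodA_add, ← mulVec_mulVec]
    calc ε ^ (n * B) ≤ ε ^ (n * B) * n :=
          le_mul_of_one_le_right (by positivity) (by exact_mod_cast i.pos)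
      _ = ε ^ (n * B) * ∑ l, (prodA A t s *ᵥ 1) l := by rw [hmass]
      _ ≤ _ := mul_sum_le_mulVec_apply
          (fun l => pow_le_prodA_apply hA hε₀ hε hr hconn hB _ i l)
          (nonneg_mulVec_of_mem_colStochastic (prodA_mem_colStochastic hA t s)
            fun _ => zero_le_one)

end Products

theorem delta_lower_bound
    (n B : ℕ) (hn : 1 ≤ n) (hB : 1 ≤ B)
    (E : ℕ → Finset (Fin n × Fin n)) (hloop : ∀ k i, (i, i) ∈ E k)
    (hconn : BStronglyConnected E B)
    (A : ℕ → Matrix (Fin n) (Fin n) ℝ) (hA : ∀ k, A k = weightMatrix (E k)) :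
    (⨅ k : ℕ, ⨅ i : Fin n, (prodA A 0 k *ᵥ fun _ => (1 : ℝ)) i)
      ≥ 1 / (n : ℝ) ^ (n * B) := by
  have hstoch : ∀ k, A k ∈ colStochastic ℝ (Fin n) :=
    fun k => hA k ▸ weightMatrix_mem_colStochastic (hloop k)
  have hweight : ∀ k i j, (j, i) ∈ E k → (n : ℝ)⁻¹ ≤ A k i j :=
    fun k _ _ h => hA k ▸ inv_le_weightMatrix_apply h
  have hwindow : BlockConnected (fun s x y => (x, y) ∈ E s) B :=
    fun q x y => ReflTransGen.mono (fun a b hab => by simpa using hab) _ _ (hconn q x y)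
  have : Nonempty (Fin n) := ⟨⟨0, hn⟩⟩
  rw [ge_iff_le, one_div, ← inv_pow]
  exact le_ciInf fun k => le_ciInf fun i =>
    pow_le_prodA_mulVec_one hstoch (by positivity) (inv_le_one_of_one_le₀ (by exact_mod_cast hn))
      hweight hloop hwindow hB 0 k i
end
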